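/- Let (N,h) be a pseudo-Riemannian manifold with a parallel symmetric 2-tensor S whose endomorphism satisfies S̃² = 0. On M := ℝ × N define g = -ds² + e^{2s}(h - S) + S. Then g is a pseudo-Riemannian metric (nondegenerate) and the cone (M̂, ĝ) over (M,g) admits a nontrivial parallel symmetric 2-tensor T with T̃² = 0, whose associated Obata function is α(s,n) = e^{2s}. -/

import Mathlib

noncomputable section

/-- Covariant derivative of the vector field `Y` along `X`, for the connection
with Christoffel symbols `Γ` (chart presentation of a pseudo-Riemannian manifold):
`(D_X Y)(p) = dY_p(X(p)) + Γ_p(X(p), Y(p))`. -/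
def covVF {E : Type*} [NormedAddCommGroup E] [NormedSpace ℝ E]
    (Γ : E → E → E → E) (X Y : E → E) : E → E :=
  fun p => fderiv ℝ Y p (X p) + Γ p (X p) (Y p)

/-- `g` is pointwise a symmetric bilinear form (a pseudo-Riemannian metric in a chart). -/
def IsMetric {E : Type*} [NormedAddCommGroup E] [NormedSpace ℝ E]
    (g : E → E → E → ℝ) : Prop :=
  ∀ x, (∀ u, IsLinearMap ℝ (g x u)) ∧ (∀ v, IsLinearMap ℝ (fun u => g x u v)) ∧
    (∀ u v, g x u v = g x v u)

/-- `g` is nondegenerate at every point of `s`. -/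
def Nondeg {E : Type*} [NormedAddCommGroup E] [NormedSpace ℝ E]
    (g : E → E → E → ℝ) (s : Set E) : Prop :=
  ∀ x ∈ s, ∀ u, (∀ v, g x u v = 0) → u = 0

/-- `Γ` is the Levi-Civita connection of `g` on `s`: torsion free (symmetric
Christoffel symbols) and compatible with the metric. -/
def IsLC {E : Type*} [NormedAddCommGroup E] [NormedSpace ℝ E]
    (g : E → E → E → ℝ) (Γ : E → E → E → E) (s : Set E) : Prop :=
  (∀ x ∈ s, ∀ u v, Γ x u v = Γ x v u) ∧
  (∀ x ∈ s, ∀ u v w, fderiv ℝ (fun y => g y v w) x u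
      = g x (Γ x u v) w + g x v (Γ x u w))

/-- Covariant Hessian `DDf` of a function (evaluated on constant directions,
which suffices since the Hessian is tensorial). -/
def hessT {E : Type*} [NormedAddCommGroup E] [NormedSpace ℝ E]
    (Γ : E → E → E → E) (f : E → ℝ) (x u v : E) : ℝ :=
  fderiv ℝ (fun y => fderiv ℝ f y v) x u - fderiv ℝ f x (Γ x u v)

/-- Covariant derivative `DT` of a 2-tensor field `T`. -/
def covTen {E : Type*} [NormedAddCommGroup E] [NormedSpace ℝ E]
    (Γ : E → E → E → E) (T : E → E → E → ℝ) (x u v w : E) : ℝ :=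
  fderiv ℝ (fun y => T y v w) x u - T x (Γ x u v) w - T x v (Γ x u w)

/-- The Obata equation (*) on `s`:
`DDDα(X,Y,Z) + 2(Dα⊗g)(X,Y,Z) + (Dα⊗g)(Y,X,Z) + (Dα⊗g)(Z,X,Y) = 0`. -/
def ObataEq {E : Type*} [NormedAddCommGroup E] [NormedSpace ℝ E]
    (g : E → E → E → ℝ) (Γ : E → E → E → E) (α : E → ℝ) (s : Set E) : Prop :=
  ∀ x ∈ s, ∀ u v w : E,
    covTen Γ (hessT Γ α) x u v w
      + 2 * (fderiv ℝ α x u * g x v w)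
      + fderiv ℝ α x v * g x u w + fderiv ℝ α x w * g x u v = 0

/-- The cone metric `ĝ = dr² + r² g` on the cone `M̂ = ℝ₊* × M`
(points `p = (r, m)`, tangent vectors `u = (a, X)` with `a` the `∂_r`-component). -/
def coneMetric {E : Type*} [NormedAddCommGroup E] [NormedSpace ℝ E]
    (g : E → E → E → ℝ) : (ℝ × E) → (ℝ × E) → (ℝ × E) → ℝ :=
  fun p u v => u.1 * v.1 + p.1 ^ 2 * g p.2 u.2 v.2

/-- The cone `M̂ = ℝ₊* × M` inside the chart `ℝ × M`. -/
def coneSet (E : Type*) : Set (ℝ × E) := {p : ℝ × E | 0 < p.1}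

/-!
With `ρ = r e^s`, the tensor `T = dρ² + ρ² S` on the cone equals `ĝ(·, T̃ ·)` for an
endomorphism `T̃` built from `S̃`, so `T̃² = 0` follows from `S̃² = 0`, and `T(∂_r, ∂_r) = e^{2s}`.
Parallelism is checked in the chart: the Koszul formula expresses the Christoffel symbols of the
cone through those of `h`, and `S`, being parallel, satisfies the same Koszul identity as `h`;
what is left is an identity using only `h(a, S̃b) = S(a, b)` and `S(a, S̃b) = 0`.
Nondegeneracy of `g`: if `e^{2s} h(u, ·) + (1 - e^{2s}) S(u, ·) = 0` then
`e^{2s} u + (1 - e^{2s}) S̃u = 0`, and applying `S̃` gives `S̃u = 0`, hence `u = 0`.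
The derivatives of `h` and `S` used along the way exist because the Levi-Civita condition on
the cone forces them to.
-/

open Real Set

section Chart

variable {E : Type*} [NormedAddCommGroup E] [NormedSpace ℝ E] {g : E → E → E → ℝ}

theorem IsMetric.apply_zero_left (hg : IsMetric g) (x v : E) : g x 0 v = 0 :=
  ((hg x).2.1 v).map_zero

theorem IsMetric.apply_zero_right (hg : IsMetric g) (x u : E) : g x u 0 = 0 :=
  ((hg x).1 u).map_zero

theorem IsMetric.of_symm (hlin : ∀ x u, IsLinearMap ℝ (g x u))
    (hsym : ∀ x u v, g x u v = g x v u) : IsMetric g := by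
  refine fun x => ⟨hlin x, fun v => ?_, hsym x⟩
  simpa only [hsym x _ v] using hlin x v

theorem IsMetric.coneMetric (hg : IsMetric g) : IsMetric (coneMetric g) := by
  refine .of_symm (fun p u => ⟨fun v w => ?_, fun c v => ?_⟩) fun p u v => ?_
  · simp only [_root_.coneMetric, Prod.fst_add, Prod.snd_add, ((hg p.2).1 u.2).map_add]
    ring
  · simp only [_root_.coneMetric, Prod.smul_fst, Prod.smul_snd, ((hg p.2).1 u.2).map_smul,
      smul_eq_mul]
    ring
  · simp only [_root_.coneMetric, (hg p.2).2.2 u.2 v.2]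
    ring

theorem IsLC.koszul {Γ : E → E → E → E} {s : Set E} (hΓ : IsLC g Γ s) {x : E} (hx : x ∈ s)
    (hsym : ∀ u v, g x u v = g x v u) (a b c : E) :
    2 * g x (Γ x a b) c = fderiv ℝ (fun y => g y b c) x a + fderiv ℝ (fun y => g y a c) x b
      - fderiv ℝ (fun y => g y a b) x c := by
  rw [hΓ.2 x hx a b c, hΓ.2 x hx b a c, hΓ.2 x hx c a b, hΓ.1 x hx b a, hΓ.1 x hx c a,
    hΓ.1 x hx c b, hsym b (Γ x a c)]
  ring

theorem differentiableAt_of_fderiv_add_apply {f f₀ : E → ℝ} {x a : E}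
    (hf₀ : DifferentiableAt ℝ f₀ x) (hf₀a : fderiv ℝ f₀ x a ≠ 0)
    (hadd : fderiv ℝ (fun y => f y + f₀ y) x a = fderiv ℝ f x a + fderiv ℝ f₀ x a) :
    DifferentiableAt ℝ f x := by
  by_contra hf
  have hff₀ : ¬ DifferentiableAt ℝ (fun y => f y + f₀ y) x := fun hff₀ =>
    hf (hf₀.fun_add_iff_left.mp hff₀)
  rw [fderiv_zero_of_not_differentiableAt hff₀, fderiv_zero_of_not_differentiableAt hf] at hadd
  simp only [zero_apply, zero_add] at hadd
  exact hf₀a hadd.symm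

theorem IsLC.fderiv_coneMetric_radial {Γc : (ℝ × E) → (ℝ × E) → (ℝ × E) → (ℝ × E)}
    (hg : IsMetric g) (hΓc : IsLC (coneMetric g) Γc (coneSet E)) {q : ℝ × E} (hq : 0 < q.1)
    (b : E) (Z : ℝ × E) :
    fderiv ℝ (fun y => coneMetric g y (0, b) Z) q (1, 0)
      = 2 * coneMetric g q (Γc q (1, 0) (0, b)) Z := by
  have hZ : (fun y => coneMetric g y (1, 0) Z) = fun _ => Z.1 := by
    funext y; simp [coneMetric, hg.apply_zero_left]
  have hb : (fun y => coneMetric g y (1, 0) (0, b)) = fun _ => 0 := by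
    funext y; simp [coneMetric, hg.apply_zero_left]
  rw [hΓc.koszul hq (hg.coneMetric q).2.2, hZ, hb]
  simp

theorem fderiv_coneMetric_apply {p u v : ℝ × E}
    (hg : DifferentiableAt ℝ (fun x => g x u.2 v.2) p.2) (d : ℝ × E) :
    fderiv ℝ (fun y => coneMetric g y u v) p d
      = 2 * p.1 * d.1 * g p.2 u.2 v.2 + p.1 ^ 2 * fderiv ℝ (fun x => g x u.2 v.2) p.2 d.2 := by
  have H : HasFDerivAt (fun y => coneMetric g y u v) _ p := (hasFDerivAt_const (u.1 * v.1) p).add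
    ((hasFDerivAt_fst.pow 2).mul (hg.hasFDerivAt.comp p hasFDerivAt_snd))
  rw [H.fderiv]
  simp only [Nat.add_one_sub_one, pow_one, nsmul_eq_mul, Nat.cast_ofNat, zero_add, add_apply,
    smul_apply, ContinuousLinearMap.comp_apply, ContinuousLinearMap.coe_snd', smul_eq_mul,
    ContinuousLinearMap.coe_fst']
  ring

end Chart

theorem eq_zero_of_forall_mul_add_mul_eq_zero {V : Type*} [AddCommGroup V] [Module ℝ V]
    {B S : V → V → ℝ} {N : V → V} (hB : ∀ u, IsLinearMap ℝ (B u))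
    (hBsym : ∀ u v, B u v = B v u) (hBnd : ∀ u, (∀ v, B u v = 0) → u = 0)
    (hS : ∀ u v, S u v = B u (N v)) (hSsym : ∀ u v, S u v = S v u) (hN : ∀ u, N (N u) = 0)
    {a b : ℝ} (ha : a ≠ 0) {u : V} (hu : ∀ v, a * B u v + b * S u v = 0) : u = 0 := by
  have hw : a • u + b • N u = 0 := hBnd _ fun v => by
    rw [hBsym, (hB v).map_add, (hB v).map_smul, (hB v).map_smul, hBsym, ← hS, hSsym, ← hu v]
    simp only [smul_eq_mul]
  have hSu : ∀ v, S u v = 0 := fun v => by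
    have h₁ : B (N v) u = S u v := by rw [hBsym, hS]
    have h₂ : B (N v) (N u) = 0 := by rw [← hS, hSsym, hS, hN, (hB u).map_zero]
    have : B (N v) (a • u + b • N u) = 0 := by rw [hw, (hB _).map_zero]
    rw [(hB _).map_add, (hB _).map_smul, (hB _).map_smul, h₁, h₂, smul_eq_mul, smul_zero,
      add_zero] at this
    exact (mul_eq_zero.mp this).resolve_left ha
  exact hBnd u fun v => by simpa [hSu, ha] using hu v

section Model

variable {F : Type*} {S : F → F → F → ℝ} {Send : F → F → F}

def baseMetric (h S : F → F → F → ℝ) (x u v : ℝ × F) : ℝ :=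
  -(u.1 * v.1) + exp (2 * x.1) * (h x.2 u.2 v.2 - S x.2 u.2 v.2) + S x.2 u.2 v.2

def coneTensor (S : F → F → F → ℝ) (p v w : ℝ × (ℝ × F)) : ℝ :=
  exp (2 * p.2.1) * ((v.1 + p.1 * v.2.1) * (w.1 + p.1 * w.2.1) + p.1 ^ 2 * S p.2.2 v.2.2 w.2.2)

/-- The endomorphism `T̃ = ĝ⁻¹ T`. Its `∂_s`-component is the junk value `0` at `r = 0`, where
`ĝ` gives that component the weight `r² = 0`. -/
def coneEndo (Send : F → F → F) (p w : ℝ × (ℝ × F)) : ℝ × (ℝ × F) :=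
  (exp (2 * p.2.1) * (w.1 + p.1 * w.2.1),
    (-(exp (2 * p.2.1) / p.1) * (w.1 + p.1 * w.2.1), Send p.2.2 w.2.2))

theorem coneTensor_symm (hSsym : ∀ n u v, S n u v = S n v u) (p a b : ℝ × (ℝ × F)) :
    coneTensor S p a b = coneTensor S p b a := by
  simp only [coneTensor, hSsym p.2.2 a.2.2]
  ring

theorem coneEndo_coneEndo [Zero F] (hS2 : ∀ n u, Send n (Send n u) = 0) {p : ℝ × (ℝ × F)}
    (hp : p.1 ≠ 0) (u : ℝ × (ℝ × F)) : coneEndo Send p (coneEndo Send p u) = 0 := by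
  simp only [coneEndo, hS2, Prod.ext_iff, Prod.fst_zero, Prod.snd_zero, and_true]
  constructor <;> field_simp <;> ring

end Model

section Nilpotent

variable {F : Type*} [NormedAddCommGroup F] [NormedSpace ℝ F] {h S : F → F → F → ℝ}
  {ΓN : F → F → F → F} {Send : F → F → F}
  {Γc : (ℝ × (ℝ × F)) → (ℝ × (ℝ × F)) → (ℝ × (ℝ × F)) → (ℝ × (ℝ × F))}

theorem IsMetric.of_eq_apply_endo (hh : IsMetric h) (hSsym : ∀ n u v, S n u v = S n v u)
    (hSend : ∀ n u v, S n u v = h n u (Send n v)) : IsMetric S := by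
  refine .of_symm (fun n u => ?_) hSsym
  have : S n u = fun v => h n v (Send n u) := funext fun v => by rw [hSsym, hSend]
  exact this ▸ (hh n).2.1 (Send n u)

theorem apply_endo_eq_zero (hh : IsMetric h) (hSend : ∀ n u v, S n u v = h n u (Send n v))
    (hS2 : ∀ n u, Send n (Send n u) = 0) (n u v : F) : S n u (Send n v) = 0 := by
  rw [hSend, hS2, hh.apply_zero_right]

theorem isLC_univ_of_covTen_eq_zero (hΓ : ∀ n u v, ΓN n u v = ΓN n v u)
    (hS : ∀ n u v w, covTen ΓN S n u v w = 0) : IsLC S ΓN univ :=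
  ⟨fun n _ => hΓ n, fun n _ u v w => by
    have := hS n u v w
    rw [covTen] at this
    linarith⟩

theorem IsMetric.baseMetric (hh : IsMetric h) (hS : IsMetric S) :
    IsMetric (baseMetric h S) := by
  refine .of_symm (fun x u => ⟨fun v w => ?_, fun c v => ?_⟩) fun x u v => ?_
  · simp only [_root_.baseMetric, Prod.fst_add, Prod.snd_add, ((hh x.2).1 u.2).map_add,
      ((hS x.2).1 u.2).map_add]
    ring
  · simp only [_root_.baseMetric, Prod.smul_fst, Prod.smul_snd, ((hh x.2).1 u.2).map_smul,
      ((hS x.2).1 u.2).map_smul, smul_eq_mul]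
    ring
  · simp only [_root_.baseMetric, (hh x.2).2.2 u.2 v.2, (hS x.2).2.2 u.2 v.2]
    ring

theorem nondeg_baseMetric (hh : IsMetric h) (hhnd : Nondeg h univ)
    (hSsym : ∀ n u v, S n u v = S n v u) (hSend : ∀ n u v, S n u v = h n u (Send n v))
    (hS2 : ∀ n u, Send n (Send n u) = 0) : Nondeg (baseMetric h S) univ := by
  intro x _ u hu
  have hS := hh.of_eq_apply_endo hSsym hSend
  have hu₁ : u.1 = 0 := by
    simpa [baseMetric, hh.apply_zero_right, hS.apply_zero_right] using hu (1, 0)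
  have hu₂ : u.2 = 0 := by
    refine eq_zero_of_forall_mul_add_mul_eq_zero (hh x.2).1 (hh x.2).2.2 (hhnd x.2 trivial)
      (hSend x.2) (hSsym x.2) (hS2 x.2) (exp_pos (2 * x.1)).ne' (b := 1 - exp (2 * x.1))
      fun v => ?_
    have := hu (0, v)
    simp only [baseMetric, mul_zero, neg_zero, zero_add] at this
    linear_combination this
  exact Prod.ext hu₁ hu₂

/-- By the Koszul formula `Z ↦ ∂_r ĝ((0, 1, ρ), Z)` is additive; junk derivatives would break
this, since `ĝ((0, 1, ρ), (0, -1, 0)) = r²` has nonzero radial derivative. -/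
theorem differentiableAt_coneMetric_baseMetric (hh : IsMetric h) (hS : IsMetric S)
    (hΓc : IsLC (coneMetric (baseMetric h S)) Γc (coneSet (ℝ × F)))
    {q : ℝ × (ℝ × F)} (hq : 0 < q.1) (ρ τ : F) :
    DifferentiableAt ℝ (fun y => coneMetric (baseMetric h S) y (0, (1, ρ)) (0, (1, τ))) q := by
  have hg := hh.baseMetric hS
  have hsq : (fun y => coneMetric (baseMetric h S) y (0, (1, ρ)) (0, (-1, 0)))
      = fun y => y.1 ^ 2 := by
    funext y; simp [coneMetric, baseMetric, hh.apply_zero_right, hS.apply_zero_right]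
  have hsum : (fun y => coneMetric (baseMetric h S) y (0, (1, ρ)) (0, (1, τ))
        + coneMetric (baseMetric h S) y (0, (1, ρ)) (0, (-1, 0)))
      = fun y => coneMetric (baseMetric h S) y (0, (1, ρ)) ((0, (1, τ)) + (0, (-1, 0))) := by
    funext y; exact (((hg.coneMetric y).1 _).map_add _ _).symm
  refine differentiableAt_of_fderiv_add_apply (a := (1, 0))
    (f₀ := fun y => coneMetric (baseMetric h S) y (0, (1, ρ)) (0, (-1, 0))) ?_ ?_ ?_
  · rw [hsq]; fun_prop
  · rw [hsq, ((hasFDerivAt_fst (𝕜 := ℝ) (p := q)).pow 2).fderiv]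
    simp [hq.ne']
  · rw [hsum, hΓc.fderiv_coneMetric_radial hg hq, hΓc.fderiv_coneMetric_radial hg hq,
      hΓc.fderiv_coneMetric_radial hg hq, ((hg.coneMetric q).1 _).map_add]
    ring

theorem differentiableAt_slices (hh : IsMetric h) (hS : IsMetric S)
    (hΓc : IsLC (coneMetric (baseMetric h S)) Γc (coneSet (ℝ × F))) (n ρ τ : F) :
    DifferentiableAt ℝ (fun m => h m ρ τ) n ∧ DifferentiableAt ℝ (fun m => S m ρ τ) n := by
  have key : ∀ s : ℝ, DifferentiableAt ℝ
      (fun m => exp (2 * s) * (h m ρ τ - S m ρ τ) + S m ρ τ) n := fun s => by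
    have H := (differentiableAt_coneMetric_baseMetric hh hS hΓc (q := (1, (s, n))) one_pos
      ρ τ).comp n (by fun_prop : DifferentiableAt ℝ (fun m : F => ((1 : ℝ), (s, m))) n)
    refine (H.add_const 1).congr_of_eventuallyEq (.of_forall fun m => ?_)
    simp only [coneMetric, mul_zero, baseMetric, mul_one, zero_add, Function.comp_apply,
      one_pow, one_mul]
    ring
  have h₀ := key 0
  have h₁ := key (log 2 / 2)
  simp only [mul_zero, exp_zero, one_mul, sub_add_cancel] at h₀
  rw [mul_div_cancel₀ _ two_ne_zero, exp_log two_pos] at h₁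
  refine ⟨h₀, ((h₀.const_mul 2).sub h₁).congr_of_eventuallyEq (.of_forall fun m => ?_)⟩
  simp only [Pi.sub_apply]
  ring

theorem differentiableAt_baseMetric_apply {x u v : ℝ × F}
    (hhd : DifferentiableAt ℝ (fun m => h m u.2 v.2) x.2)
    (hSd : DifferentiableAt ℝ (fun m => S m u.2 v.2) x.2) :
    DifferentiableAt ℝ (fun x => baseMetric h S x u v) x := by
  have := hhd.comp x differentiableAt_snd
  have := hSd.comp x differentiableAt_snd
  unfold baseMetric
  fun_prop

theorem fderiv_baseMetric_apply {x u v : ℝ × F}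
    (hhd : DifferentiableAt ℝ (fun m => h m u.2 v.2) x.2)
    (hSd : DifferentiableAt ℝ (fun m => S m u.2 v.2) x.2) (d : ℝ × F) :
    fderiv ℝ (fun x => baseMetric h S x u v) x d
      = 2 * d.1 * exp (2 * x.1) * (h x.2 u.2 v.2 - S x.2 u.2 v.2)
        + exp (2 * x.1) * (fderiv ℝ (fun m => h m u.2 v.2) x.2 d.2
          - fderiv ℝ (fun m => S m u.2 v.2) x.2 d.2)
        + fderiv ℝ (fun m => S m u.2 v.2) x.2 d.2 := by
  have hS₂ := hSd.hasFDerivAt.comp x hasFDerivAt_snd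
  have H : HasFDerivAt (fun x => baseMetric h S x u v) _ x :=
    ((hasFDerivAt_const (-(u.1 * v.1)) x).add
      (((hasFDerivAt_fst (𝕜 := ℝ) (p := x)).const_mul 2 |>.exp).mul
        ((hhd.hasFDerivAt.comp x hasFDerivAt_snd).sub hS₂))).add hS₂
  rw [H.fderiv]
  simp only [Pi.sub_apply, Function.comp_apply, zero_add, add_apply, smul_apply, sub_apply,
    ContinuousLinearMap.comp_apply, ContinuousLinearMap.coe_snd', smul_eq_mul,
    ContinuousLinearMap.coe_fst', add_left_inj]
  ring

theorem two_mul_coneMetric_christoffel (hh : IsMetric h) (hS : IsMetric S)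
    (hΓN : IsLC h ΓN univ) (hSΓ : IsLC S ΓN univ)
    (hΓc : IsLC (coneMetric (baseMetric h S)) Γc (coneSet (ℝ × F)))
    {p : ℝ × (ℝ × F)} (hp : 0 < p.1) (u v Z : ℝ × (ℝ × F)) :
    2 * coneMetric (baseMetric h S) p (Γc p u v) Z
      = 2 * p.1 * (u.1 * baseMetric h S p.2 v.2 Z.2 + v.1 * baseMetric h S p.2 u.2 Z.2
          - Z.1 * baseMetric h S p.2 u.2 v.2)
        + 2 * p.1 ^ 2 * exp (2 * p.2.1)
          * (u.2.1 * (h p.2.2 v.2.2 Z.2.2 - S p.2.2 v.2.2 Z.2.2)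
            + v.2.1 * (h p.2.2 u.2.2 Z.2.2 - S p.2.2 u.2.2 Z.2.2)
            - Z.2.1 * (h p.2.2 u.2.2 v.2.2 - S p.2.2 u.2.2 v.2.2))
        + 2 * p.1 ^ 2 * (exp (2 * p.2.1)
            * (h p.2.2 (ΓN p.2.2 u.2.2 v.2.2) Z.2.2 - S p.2.2 (ΓN p.2.2 u.2.2 v.2.2) Z.2.2)
          + S p.2.2 (ΓN p.2.2 u.2.2 v.2.2) Z.2.2) := by
  have hd := differentiableAt_slices hh hS hΓc p.2.2
  rw [hΓc.koszul hp ((hh.baseMetric hS).coneMetric p).2.2]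
  simp only [fderiv_coneMetric_apply (differentiableAt_baseMetric_apply (hd _ _).1 (hd _ _).2),
    fderiv_baseMetric_apply (hd _ _).1 (hd _ _).2]
  have kh := hΓN.koszul (mem_univ p.2.2) (hh p.2.2).2.2 u.2.2 v.2.2 Z.2.2
  have kS := hSΓ.koszul (mem_univ p.2.2) (hS p.2.2).2.2 u.2.2 v.2.2 Z.2.2
  linear_combination -(p.1 ^ 2 * exp (2 * p.2.1)) * kh - p.1 ^ 2 * (1 - exp (2 * p.2.1)) * kS

theorem coneTensor_eq_coneMetric_coneEndo (hh : IsMetric h)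
    (hSend : ∀ n u v, S n u v = h n u (Send n v)) (hS2 : ∀ n u, Send n (Send n u) = 0)
    (p a b : ℝ × (ℝ × F)) :
    coneTensor S p a b = coneMetric (baseMetric h S) p a (coneEndo Send p b) := by
  simp only [coneTensor, coneMetric, baseMetric, coneEndo, ← hSend,
    apply_endo_eq_zero hh hSend hS2]
  rcases eq_or_ne p.1 0 with hp | hp
  · rw [hp]
    ring
  · field_simp
    ring

theorem coneTensor_radial (hS : IsMetric S) (p : ℝ × (ℝ × F)) :
    coneTensor S p (1, 0) (1, 0) = exp (2 * p.2.1) := by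
  simp [coneTensor, hS.apply_zero_left]

theorem fderiv_coneTensor_apply {p v w : ℝ × (ℝ × F)}
    (hSd : DifferentiableAt ℝ (fun m => S m v.2.2 w.2.2) p.2.2) (u : ℝ × (ℝ × F)) :
    fderiv ℝ (fun y => coneTensor S y v w) p u
      = 2 * u.2.1 * coneTensor S p v w + exp (2 * p.2.1) * (u.1 * (v.2.1 * (w.1 + p.1 * w.2.1)
          + (v.1 + p.1 * v.2.1) * w.2.1 + 2 * p.1 * S p.2.2 v.2.2 w.2.2)
        + p.1 ^ 2 * fderiv ℝ (fun m => S m v.2.2 w.2.2) p.2.2 u.2.2) := by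
  have hr := hasFDerivAt_fst (𝕜 := ℝ) (p := p)
  have hs := (hasFDerivAt_fst (𝕜 := ℝ) (p := p.2)).comp p hasFDerivAt_snd
  have hn : HasFDerivAt (fun y : ℝ × (ℝ × F) => y.2.2)
      ((ContinuousLinearMap.snd ℝ ℝ F).comp (ContinuousLinearMap.snd ℝ ℝ (ℝ × F))) p :=
    hasFDerivAt_snd.comp p hasFDerivAt_snd
  have hSn := hSd.hasFDerivAt.comp p hn
  have H : HasFDerivAt (fun y => coneTensor S y v w) _ p :=
    (hs.const_mul 2 |>.exp).mul ((((hr.mul_const v.2.1).const_add v.1).mul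
        ((hr.mul_const w.2.1).const_add w.1)).add
      ((hr.pow 2).mul hSn))
  rw [H.fderiv]
  simp only [Function.comp_apply, Nat.add_one_sub_one, pow_one, nsmul_eq_mul, Nat.cast_ofNat,
    smul_add, add_apply, smul_apply, ContinuousLinearMap.coe_fst', smul_eq_mul,
    ContinuousLinearMap.comp_apply, ContinuousLinearMap.coe_snd', coneTensor]
  ring

theorem covTen_coneTensor_eq_zero (hh : IsMetric h) (hSsym : ∀ n u v, S n u v = S n v u)
    (hSend : ∀ n u v, S n u v = h n u (Send n v)) (hS2 : ∀ n u, Send n (Send n u) = 0)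
    (hΓN : IsLC h ΓN univ) (hSΓ : IsLC S ΓN univ)
    (hΓc : IsLC (coneMetric (baseMetric h S)) Γc (coneSet (ℝ × F)))
    {p : ℝ × (ℝ × F)} (hp : 0 < p.1) (u v w : ℝ × (ℝ × F)) :
    covTen Γc (coneTensor S) p u v w = 0 := by
  have hS := hh.of_eq_apply_endo hSsym hSend
  have hT := coneTensor_eq_coneMetric_coneEndo hh hSend hS2 p
  have k₁ := two_mul_coneMetric_christoffel hh hS hΓN hSΓ hΓc hp u v (coneEndo Send p w)
  have k₂ := two_mul_coneMetric_christoffel hh hS hΓN hSΓ hΓc hp u w (coneEndo Send p v)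
  rw [covTen, coneTensor_symm hSsym p v, hT, hT,
    fderiv_coneTensor_apply (differentiableAt_slices hh hS hΓc _ _ _).2,
    hSΓ.2 _ (mem_univ _)]
  generalize coneMetric (baseMetric h S) p (Γc p u v) (coneEndo Send p w) = A at k₁ ⊢
  generalize coneMetric (baseMetric h S) p (Γc p u w) (coneEndo Send p v) = B at k₂ ⊢
  simp only [coneEndo, coneTensor, baseMetric, ← hSend, apply_endo_eq_zero hh hSend hS2]
    at k₁ k₂ ⊢
  rw [hSsym _ w.2.2 v.2.2, hSsym _ (ΓN _ u.2.2 w.2.2) v.2.2] at k₂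
  field_simp at k₁ k₂
  linear_combination -k₁ - k₂

end Nilpotent

/-- if `(N,h)` carries a parallel symmetric 2-tensor `S` with `S̃² = 0`,
then `g = -ds² + e^{2s}(h - S) + S` on `M = ℝ × N` is nondegenerate, and the cone over
`(M,g)` admits a nontrivial parallel symmetric 2-tensor `T` with `T̃² = 0` and
associated Obata function `α(s,n) = e^{2s}`. -/
theorem nilpotent_case_construction
    {F : Type*} [NormedAddCommGroup F] [NormedSpace ℝ F]
    (h : F → F → F → ℝ) (hh : IsMetric h) (hhnd : Nondeg h Set.univ)
    (ΓN : F → F → F → F) (hΓN : IsLC h ΓN Set.univ)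
    (S : F → F → F → ℝ)
    (hSsym : ∀ n u v, S n u v = S n v u)
    (hSpar : ∀ n u v w : F, covTen ΓN S n u v w = 0)
    (Send : F → F → F)
    (hSend : ∀ n u v, S n u v = h n u (Send n v))
    (hS2 : ∀ n u, Send n (Send n u) = 0)
    (gM : (ℝ × F) → (ℝ × F) → (ℝ × F) → ℝ)
    (hgM : ∀ (x : ℝ × F) (u v : ℝ × F),
        gM x u v = -(u.1 * v.1) + Real.exp (2 * x.1) * (h x.2 u.2 v.2 - S x.2 u.2 v.2)
          + S x.2 u.2 v.2) :
    Nondeg gM Set.univ ∧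
    (∀ Γc : (ℝ × (ℝ × F)) → (ℝ × (ℝ × F)) → (ℝ × (ℝ × F)) → (ℝ × (ℝ × F)),
      IsLC (coneMetric gM) Γc (coneSet (ℝ × F)) →
      ∃ (T : (ℝ × (ℝ × F)) → (ℝ × (ℝ × F)) → (ℝ × (ℝ × F)) → ℝ)
        (Tend : (ℝ × (ℝ × F)) → (ℝ × (ℝ × F)) → (ℝ × (ℝ × F))),
        (∀ p u v, T p u v = coneMetric gM p u (Tend p v)) ∧
        (∀ p u v, T p u v = T p v u) ∧
        (∃ p : ℝ × (ℝ × F), 0 < p.1 ∧ ∃ u v, T p u v ≠ 0) ∧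
        (∀ p : ℝ × (ℝ × F), 0 < p.1 → ∀ u v w, covTen Γc T p u v w = 0) ∧
        (∀ p : ℝ × (ℝ × F), 0 < p.1 → ∀ u, Tend p (Tend p u) = 0) ∧
        (∀ p : ℝ × (ℝ × F), 0 < p.1 →
          T p ((1 : ℝ), (0 : ℝ × F)) ((1 : ℝ), (0 : ℝ × F)) = Real.exp (2 * p.2.1))) := by
  obtain rfl : gM = baseMetric h S := funext fun x => funext fun u => funext (hgM x u)
  have hS := hh.of_eq_apply_endo hSsym hSend
  have hSΓ := isLC_univ_of_covTen_eq_zero (fun n => hΓN.1 n trivial) hSpar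
  refine ⟨nondeg_baseMetric hh hhnd hSsym hSend hS2, fun Γc hΓc =>
    ⟨coneTensor S, coneEndo Send, coneTensor_eq_coneMetric_coneEndo hh hSend hS2,
      coneTensor_symm hSsym, ⟨(1, 0), one_pos, (1, 0), (1, 0), ?_⟩,
      fun p hp => covTen_coneTensor_eq_zero hh hSsym hSend hS2 hΓN hSΓ hΓc hp,
      fun p hp => coneEndo_coneEndo hS2 hp.ne', fun p _ => coneTensor_radial hS p⟩⟩
  exact (coneTensor_radial hS _).trans_ne (exp_pos _).ne'
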